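/- Let R be a Noetherian ring and M₂, M₁, M₀ finitely generated R-modules with R-linear maps f : M₂ → M₁ and g : M₁ → M₀ such that g is surjective and range f = ker g (the sequence M₂ → M₁ → M₀ → 0 is exact). If len_R M₀ ♯ len_R M₂ ≤ len_R M₁, where ♯ is the natural (Hessenberg) sum of ordinals, then f is injective, i.e., the sequence 0 → M₂ → M₁ → M₀ → 0 is exact. -/

import Mathlib

/-!
The length is subadditive along short exact sequences with respect to `♯`: by well-founded
induction, the rank of a submodule `P ≤ M` is at most the rank of its image in `M ⧸ N` `♯` the
rank of `P ⊓ N` in `N`, because by modularity a strict inclusion `P < P'` stays strict in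
`M ⧸ N` or in `N`. Moreover a quotient by a nonzero submodule has strictly smaller length.
So if `ker f ≠ 0`, then `len M₁ ≤ len M₀ ♯ len (M₂ ⧸ ker f) < len M₀ ♯ len M₂`.
-/

open Ordinal

/-- Natural (Hessenberg) sum of ordinals, as defined in Mathlib's former
`Mathlib/SetTheory/Ordinal/NaturalOps.lean` (removed from Mathlib since). -/
noncomputable def Ordinal.nadd.{w} : Ordinal.{w} → Ordinal.{w} → Ordinal.{w}
  | a, b =>
    max (blsub.{w, w} a fun a' _ => Ordinal.nadd a' b) (blsub.{w, w} b fun b' _ => Ordinal.nadd a b')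
termination_by o₁ o₂ => (o₁, o₂)

infixl:65 " ♯ " => Ordinal.nadd

/-- The ordinal length of a Noetherian module: the rank of the zero submodule in the
well-founded order of submodules under reverse inclusion. -/
noncomputable def moduleLength (R M : Type*) [Ring R] [AddCommGroup M] [Module R M]
    [IsNoetherian R M] : Ordinal :=
  IsWellFounded.rank (α := Submodule R M) (· > ·) ⊥

universe u v

namespace Ordinal

theorem nadd_lt_nadd_left {b c : Ordinal} (h : b < c) (a : Ordinal) : a ♯ b < a ♯ c := by
  rw [nadd.eq_1 a c]
  exact (lt_blsub (fun b' _ => a ♯ b') b h).trans_le (le_max_right _ _)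

theorem nadd_lt_nadd_right {b c : Ordinal} (h : b < c) (a : Ordinal) : b ♯ a < c ♯ a := by
  rw [nadd.eq_1 c a]
  exact (lt_blsub (fun a' _ => a' ♯ a) b h).trans_le (le_max_left _ _)

theorem nadd_le_nadd_left {b c : Ordinal} (h : b ≤ c) (a : Ordinal) : a ♯ b ≤ a ♯ c :=
  StrictMono.monotone (fun _ _ h => nadd_lt_nadd_left h a) h

theorem nadd_le_nadd_right {b c : Ordinal} (h : b ≤ c) (a : Ordinal) : b ♯ a ≤ c ♯ a :=
  StrictMono.monotone (fun _ _ h => nadd_lt_nadd_right h a) h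

end Ordinal

namespace IsWellFounded

variable {α β : Type u} {r : α → α → Prop} {s : β → β → Prop}
  [IsWellFounded α r] [IsWellFounded β s]

theorem rank_le_rank_of_relHom (f : r →r s) (a : α) : rank r a ≤ rank s (f a) := by
  induction a using IsWellFounded.induction r with
  | _ a ih =>
    rw [rank_eq]
    exact Ordinal.iSup_le fun ⟨b, hb⟩ =>
      Order.succ_le_of_lt ((ih b hb).trans_lt (rank_lt_of_rel (f.map_rel hb)))

theorem rank_relIso_apply (e : r ≃r s) (a : α) : rank s (e a) = rank r a := by
  refine le_antisymm ?_ (rank_le_rank_of_relHom e.toRelEmbedding.toRelHom a)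
  simpa using rank_le_rank_of_relHom e.symm.toRelEmbedding.toRelHom (e a)

end IsWellFounded

namespace Submodule

variable {R : Type u} [Ring R] {M : Type v} [AddCommGroup M] [Module R M]

theorem map_mkQ_lt_or_comap_subtype_lt (N : Submodule R M) {P P' : Submodule R M}
    (h : P < P') : P.map N.mkQ < P'.map N.mkQ ∨ P.comap N.subtype < P'.comap N.subtype := by
  refine (map_mono h.le).lt_or_eq.imp_right fun hmap => (comap_mono h.le).lt_of_ne fun hcomap => ?_
  have hsup : P' ⊔ N ≤ P ⊔ N := by
    have := congrArg (comap N.mkQ) hmap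
    rw [comap_map_mkQ, comap_map_mkQ] at this
    rw [sup_comm P' N, sup_comm P N, this]
  have hinf : P' ⊓ N ≤ P ⊓ N := by
    have := congrArg (map N.subtype) hcomap
    rw [map_comap_subtype, map_comap_subtype] at this
    rw [inf_comm P' N, inf_comm P N, this]
  exact h.ne (eq_of_le_of_inf_le_of_sup_le h.le hinf hsup)

end Submodule

section moduleLength

variable {R : Type u} [Ring R] {M : Type v} [AddCommGroup M] [Module R M] [IsNoetherian R M]

local notation "rk" => IsWellFounded.rank (α := Submodule R _) (· > ·)

theorem rank_le_rank_map_mkQ_nadd_rank_comap_subtype (N P : Submodule R M) :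
    rk P ≤ rk (P.map N.mkQ) ♯ rk (P.comap N.subtype) := by
  induction P using IsWellFounded.induction ((· > ·) : Submodule R M → Submodule R M → Prop) with
  | _ P ih =>
    rw [IsWellFounded.rank_eq]
    refine Ordinal.iSup_le fun ⟨P', hP'⟩ => Order.succ_le_of_lt ((ih P' hP').trans_lt ?_)
    have hmap := WellFoundedGT.rank_strictAnti.antitone (Submodule.map_mono (f := N.mkQ) hP'.le)
    have hcomap :=
      WellFoundedGT.rank_strictAnti.antitone (Submodule.comap_mono (f := N.subtype) hP'.le)
    rcases N.map_mkQ_lt_or_comap_subtype_lt hP' with hlt | hlt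
    · exact (Ordinal.nadd_le_nadd_left hcomap _).trans_lt
        (Ordinal.nadd_lt_nadd_right (WellFoundedGT.rank_strictAnti hlt) _)
    · exact (Ordinal.nadd_le_nadd_right hmap _).trans_lt
        (Ordinal.nadd_lt_nadd_left (WellFoundedGT.rank_strictAnti hlt) _)

theorem moduleLength_le_nadd (N : Submodule R M) :
    moduleLength R M ≤ moduleLength R (M ⧸ N) ♯ moduleLength R N := by
  simpa [moduleLength] using
    rank_le_rank_map_mkQ_nadd_rank_comap_subtype N ⊥

theorem moduleLength_congr {M' : Type v} [AddCommGroup M'] [Module R M'] [IsNoetherian R M']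
    (e : M ≃ₗ[R] M') : moduleLength R M = moduleLength R M' := by
  have := IsWellFounded.rank_relIso_apply (r := ((· > ·) : Submodule R M → _ → Prop))
    (s := (· > ·)) (Submodule.orderIsoMapComap e).toRelIsoLT.swap ⊥
  exact this.symm.trans (congrArg _ (Submodule.map_bot (e : M →ₗ[R] M')))

theorem moduleLength_quotient_lt {N : Submodule R M} (hN : N ≠ ⊥) :
    moduleLength R (M ⧸ N) < moduleLength R M := by
  have hcomap := IsWellFounded.rank_le_rank_of_relHom
    (r := ((· > ·) : Submodule R (M ⧸ N) → _ → Prop)) (s := (· > ·))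
    ⟨_, fun h => Submodule.comap_strictMono_of_surjective N.mkQ_surjective h⟩ ⊥
  rw [RelHom.coeFn_mk, Submodule.comap_bot, Submodule.ker_mkQ] at hcomap
  exact hcomap.trans_lt (WellFoundedGT.rank_strictAnti (bot_lt_iff_ne_bot.mpr hN))

end moduleLength

/-- Length criterion for acyclicity: if `M₂ → M₁ → M₀ → 0` is exact and
`len M₀ ♯ len M₂ ≤ len M₁`, then the first map is injective, i.e.
`0 → M₂ → M₁ → M₀ → 0` is exact. -/
theorem injective_of_nadd_le
    (R : Type u) [CommRing R] [IsNoetherianRing R]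
    (M₂ M₁ M₀ : Type v) [AddCommGroup M₂] [AddCommGroup M₁] [AddCommGroup M₀]
    [Module R M₂] [Module R M₁] [Module R M₀]
    [Module.Finite R M₂] [Module.Finite R M₁] [Module.Finite R M₀]
    (f : M₂ →ₗ[R] M₁) (g : M₁ →ₗ[R] M₀)
    (hg : Function.Surjective g) (hexact : LinearMap.range f = LinearMap.ker g)
    (hlen : moduleLength R M₀ ♯ moduleLength R M₂ ≤ moduleLength R M₁) :
    Function.Injective f := by
  rw [← LinearMap.ker_eq_bot]
  by_contra hf
  have hcoker : moduleLength R (M₁ ⧸ LinearMap.ker g) = moduleLength R M₀ :=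
    moduleLength_congr (g.quotKerEquivOfSurjective hg)
  have hker : moduleLength R (LinearMap.ker g) = moduleLength R (M₂ ⧸ LinearMap.ker f) :=
    (moduleLength_congr (f.quotKerEquivRange.trans (.ofEq _ _ hexact))).symm
  refine lt_irrefl (moduleLength R M₁) ?_
  calc moduleLength R M₁
      ≤ moduleLength R (M₁ ⧸ LinearMap.ker g) ♯ moduleLength R (LinearMap.ker g) :=
        moduleLength_le_nadd _
    _ = moduleLength R M₀ ♯ moduleLength R (M₂ ⧸ LinearMap.ker f) := by rw [hcoker, hker]
    _ < moduleLength R M₀ ♯ moduleLength R M₂ :=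
        Ordinal.nadd_lt_nadd_left (moduleLength_quotient_lt hf) _
    _ ≤ moduleLength R M₁ := hlen
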